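/- arXiv:2605.04975 — 6 statements merged into one kernel-verified Lean document; each statement's English description precedes it below -/
import Mathlib

section
/- Special soundness of the Schnorr protocol: let G be a cyclic group of prime order p generated by g, and pk : G. Suppose there are two accepting transcripts with the same commitment R: g^z = R * pk^c and g^z' = R * pk^{c'} with c ≠ c' in ZMod p. Then pk = g^((z - z')/(c - c')), i.e., the discrete logarithm of pk can be computed as (z - z') * (c - c')⁻¹. -/
lemma pow_val_cast_eq {G : Type*} [CommGroup G] {p : ℕ} (hp : 0 < p)
    {x : G} (hx : x ^ p = 1) (n : ℕ) : x ^ n = x ^ ((n : ZMod p)).val := by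
  haveI : NeZero p := ⟨hp.ne'⟩
  rw [ZMod.val_natCast]
  conv_lhs => rw [← Nat.div_add_mod n p]
  rw [pow_add, pow_mul, hx, one_pow, one_mul]

/-- Special soundness of the Schnorr protocol. -/
theorem schnorr_special_soundness {G : Type*} [CommGroup G] (p : ℕ) (hp : p.Prime)
    (g : G) (hG : ∀ x : G, x ^ p = 1) (hg : orderOf g = p)
    (pk R : G) (z z' c c' : ZMod p)
    (h1 : g ^ (z.val) = R * pk ^ (c.val))
    (h2 : g ^ (z'.val) = R * pk ^ (c'.val))
    (hc : c ≠ c') :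
    pk = g ^ (((z - z') * (c - c')⁻¹).val) := by
  haveI : Fact p.Prime := ⟨hp⟩
  have hp0 : 0 < p := hp.pos
  have key : ∀ (x : G) (a : ZMod p) (n : ℕ), (n : ZMod p) = a → x ^ n = x ^ a.val := by
    intro x a n hn
    rw [pow_val_cast_eq hp0 (hG x) n, hn]
  -- additivity
  have hadd : ∀ (x : G) (a b : ZMod p), x ^ (a + b).val = x ^ a.val * x ^ b.val := by
    intro x a b
    rw [← pow_add]
    exact (key x (a + b) (a.val + b.val) (by push_cast [ZMod.natCast_val, ZMod.cast_id]; ring)).symm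
  -- multiplicativity
  have hmul : ∀ (x : G) (a b : ZMod p), x ^ (a * b).val = (x ^ a.val) ^ b.val := by
    intro x a b
    rw [← pow_mul]
    exact (key x (a * b) (a.val * b.val) (by push_cast [ZMod.natCast_val, ZMod.cast_id]; ring)).symm
  have hgz : g ^ ((z - z').val) * g ^ (z'.val) = g ^ (z.val) := by
    rw [← hadd g (z - z') z', sub_add_cancel]
  have hpkc : pk ^ ((c - c').val) * pk ^ (c'.val) = pk ^ (c.val) := by
    rw [← hadd pk (c - c') c', sub_add_cancel]
  have main : g ^ ((z - z').val) = pk ^ ((c - c').val) := by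
    have e : g ^ ((z - z').val) * (R * pk ^ (c'.val)) = pk ^ ((c - c').val) * (R * pk ^ (c'.val)) := by
      rw [← h2, hgz, h1, ← hpkc]
      rw [h2]; exact mul_left_comm R _ _
    exact mul_right_cancel e
  have hcc : c - c' ≠ 0 := sub_ne_zero.mpr hc
  have hone : (c - c') * (c - c')⁻¹ = 1 := ZMod.mul_inv_of_unit _ (hcc.isUnit)
  calc pk = pk ^ ((1 : ZMod p)).val := by
        rw [ZMod.val_one_eq_one_mod]
        rw [Nat.mod_eq_of_lt hp.one_lt, pow_one]
    _ = pk ^ (((c - c') * (c - c')⁻¹).val) := by rw [hone]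
    _ = (pk ^ ((c - c').val)) ^ ((c - c')⁻¹.val) := hmul pk _ _
    _ = (g ^ ((z - z').val)) ^ ((c - c')⁻¹.val) := by rw [main]
    _ = g ^ (((z - z') * (c - c')⁻¹).val) := (hmul g _ _).symm
end

section
/- Special soundness of the Chaum–Pedersen proof for the encryption relation: let G be a group of prime order p with generator g, and fix pk, Z, req, c1, c2, R1, R2, R3 : G. Suppose two accepting transcripts with the same commitments and distinct challenges c ≠ c': g^{z_sk} = R1 * pk^c, g^{z_α} = R2 * c1^c, Z^{z_α} * req^{z_sk} = R3 * c2^c, and similarly with primes for challenge c'. Then setting sk := (z_sk - z'_sk)/(c - c') and α := (z_α - z'_α)/(c - c'), it holds that pk = g^sk, c1 = g^α, and c2 = Z^α * req^sk. -/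
/-- Special soundness of the Chaum–Pedersen proof for the encryption relation. -/
theorem chaum_pedersen_enc_special_soundness {G : Type*} [CommGroup G]
    (p : ℕ) (hp : p.Prime) (g : G) (hG : ∀ x : G, x ^ p = 1)
    (pk Z req c1 c2 R1 R2 R3 : G)
    (zsk zα zsk' zα' c c' : ZMod p)
    (h1 : g ^ (zsk.val) = R1 * pk ^ (c.val))
    (h2 : g ^ (zα.val) = R2 * c1 ^ (c.val))
    (h3 : Z ^ (zα.val) * req ^ (zsk.val) = R3 * c2 ^ (c.val))
    (h1' : g ^ (zsk'.val) = R1 * pk ^ (c'.val))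
    (h2' : g ^ (zα'.val) = R2 * c1 ^ (c'.val))
    (h3' : Z ^ (zα'.val) * req ^ (zsk'.val) = R3 * c2 ^ (c'.val))
    (hc : c ≠ c') :
    pk = g ^ (((zsk - zsk') * (c - c')⁻¹).val) ∧
    c1 = g ^ (((zα - zα') * (c - c')⁻¹).val) ∧
    c2 = Z ^ (((zα - zα') * (c - c')⁻¹).val) * req ^ (((zsk - zsk') * (c - c')⁻¹).val) := by
  haveI : Fact p.Prime := ⟨hp⟩
  have hmod : ∀ (x : G) (n : ℕ), x ^ (n % p) = x ^ n := by
    intro x n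
    conv_rhs => rw [← Nat.div_add_mod n p]
    rw [pow_add, pow_mul, hG, one_pow, one_mul]
  have hadd : ∀ (x : G) (a b : ZMod p), x ^ ((a + b).val) = x ^ a.val * x ^ b.val := by
    intro x a b
    rw [← pow_add, ← hmod x (a.val + b.val), ZMod.val_add]
  have hmul : ∀ (x : G) (a b : ZMod p), x ^ ((a * b).val) = (x ^ a.val) ^ b.val := by
    intro x a b
    rw [← pow_mul, ← hmod x (a.val * b.val), ZMod.val_mul]
  have hone : ∀ x : G, x ^ ((1 : ZMod p).val) = x := by
    intro x; rw [ZMod.val_one, pow_one]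
  have hsub : ∀ (x : G) (a b : ZMod p), x ^ ((a - b).val) = x ^ a.val * (x ^ b.val)⁻¹ := by
    intro x a b
    have h := hadd x (a - b) b
    rw [sub_add_cancel] at h
    exact eq_mul_inv_iff_mul_eq.mpr h.symm
  have hd : c - c' ≠ 0 := sub_ne_zero.mpr hc
  have hdd : (c - c') * (c - c')⁻¹ = 1 := mul_inv_cancel₀ hd
  have e1 : g ^ ((zsk - zsk').val) = pk ^ ((c - c').val) := by
    rw [hsub, hsub, h1, h1']
    simp [mul_inv_rev, mul_comm, mul_left_comm, mul_assoc, inv_mul_cancel_left]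
  have e2 : g ^ ((zα - zα').val) = c1 ^ ((c - c').val) := by
    rw [hsub, hsub, h2, h2']
    simp [mul_inv_rev, mul_comm, mul_left_comm, mul_assoc, inv_mul_cancel_left]
  have e3 : Z ^ ((zα - zα').val) * req ^ ((zsk - zsk').val) = c2 ^ ((c - c').val) := by
    rw [hsub Z, hsub req, hsub c2,
      show Z ^ zα.val * (Z ^ zα'.val)⁻¹ * (req ^ zsk.val * (req ^ zsk'.val)⁻¹)
        = (Z ^ zα.val * req ^ zsk.val) * (Z ^ zα'.val * req ^ zsk'.val)⁻¹ by
          simp [mul_inv_rev, mul_comm, mul_left_comm, mul_assoc, inv_mul_cancel_left],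
      h3, h3']
    simp [mul_inv_rev, mul_comm, mul_left_comm, mul_assoc, inv_mul_cancel_left]
  refine ⟨?_, ?_, ?_⟩
  · rw [hmul, e1, ← hmul, hdd, hone]
  · rw [hmul, e2, ← hmul, hdd, hone]
  · rw [hmul Z, hmul req, ← mul_pow, e3, ← hmul, hdd, hone]
end

section
/- Perfect simulation distribution for Schnorr HVZK: let G be a finite cyclic group of prime order p with generator g and pk = g^sk. The distribution of honest transcripts (R, c, z) where r, c are uniform in ZMod p, R = g^r, z = r + c·sk, equals the distribution of simulated transcripts (R, c, z) where c, z are uniform in ZMod p and R = g^z * pk^{-c}. Formally, the map (r, c) ↦ (g^r, c, r + c·sk) and the map (z, c) ↦ (g^z * pk^{-c}, c, z), both with uniform inputs on (ZMod p) × (ZMod p), induce the same probability measure on G × ZMod p × ZMod p. -/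
open scoped ENNReal

lemma uniform_map_equiv {α : Type*} [Fintype α] [Nonempty α] (e : α ≃ α) :
    PMF.map e (PMF.uniformOfFintype α) = PMF.uniformOfFintype α := by
  ext y
  rw [PMF.map_apply]
  rw [tsum_eq_single (e.symm y) (by
    intro b hb
    simp only [ite_eq_right_iff]
    intro h
    exact absurd (by simp [h]) hb)]
  simp

/-- Perfect simulation distribution for Schnorr HVZK: honest and simulated
transcripts have the same distribution. -/
theorem schnorr_hvzk_perfect_simulation {G : Type*} [CommGroup G] [Fintype G]
    (p : ℕ) [Fact p.Prime]
    (hcard : Fintype.card G = p)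
    (g : G) (hg : orderOf g = p)
    (sk : ZMod p) (pk : G) (hpk : pk = g ^ (sk.val)) :
    PMF.map (fun rc : ZMod p × ZMod p => (g ^ (rc.1.val), rc.2, rc.1 + rc.2 * sk))
        (PMF.uniformOfFintype (ZMod p × ZMod p)) =
    PMF.map (fun zc : ZMod p × ZMod p => (g ^ (zc.1.val) * pk ^ ((-zc.2).val), zc.2, zc.1))
        (PMF.uniformOfFintype (ZMod p × ZMod p)) := by
  have hp : 0 < p := (Fact.out : p.Prime).pos
  have hpow : ∀ a b : ZMod p, g ^ a.val * g ^ b.val = g ^ (a + b).val := by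
    intro a b
    rw [← pow_add, pow_eq_pow_iff_modEq, hg]
    have : ((a.val + b.val : ℕ) : ZMod p) = (((a + b).val : ℕ) : ZMod p) := by
      push_cast
      rw [ZMod.natCast_val, ZMod.natCast_val, ZMod.natCast_val]
      simp [ZMod.cast_id]
    exact (ZMod.natCast_eq_natCast_iff _ _ _).mp this
  have hpowmul : ∀ a b : ZMod p, (g ^ a.val) ^ b.val = g ^ (a * b).val := by
    intro a b
    rw [← pow_mul, pow_eq_pow_iff_modEq, hg]
    have : ((a.val * b.val : ℕ) : ZMod p) = (((a * b).val : ℕ) : ZMod p) := by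
      push_cast
      rw [ZMod.natCast_val, ZMod.natCast_val, ZMod.natCast_val]
      simp [ZMod.cast_id]
    exact (ZMod.natCast_eq_natCast_iff _ _ _).mp this
  let e : (ZMod p × ZMod p) ≃ (ZMod p × ZMod p) :=
    { toFun := fun rc => (rc.1 + rc.2 * sk, rc.2)
      invFun := fun zc => (zc.1 - zc.2 * sk, zc.2)
      left_inv := fun rc => by simp
      right_inv := fun zc => by simp }
  have key : (fun zc : ZMod p × ZMod p => (g ^ (zc.1.val) * pk ^ ((-zc.2).val), zc.2, zc.1)) ∘ e
      = (fun rc : ZMod p × ZMod p => (g ^ (rc.1.val), rc.2, rc.1 + rc.2 * sk)) := by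
    funext rc
    obtain ⟨r, c⟩ := rc
    simp only [Function.comp_apply, e, Equiv.coe_fn_mk, hpk, Prod.mk.injEq, and_true, true_and, and_self]
    rw [hpowmul, hpow]
    congr 1
    ring_nf
  calc PMF.map (fun rc : ZMod p × ZMod p => (g ^ (rc.1.val), rc.2, rc.1 + rc.2 * sk))
        (PMF.uniformOfFintype (ZMod p × ZMod p))
      = PMF.map ((fun zc : ZMod p × ZMod p =>
          (g ^ (zc.1.val) * pk ^ ((-zc.2).val), zc.2, zc.1)) ∘ e)
        (PMF.uniformOfFintype (ZMod p × ZMod p)) := by rw [key]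
    _ = PMF.map (fun zc : ZMod p × ZMod p => (g ^ (zc.1.val) * pk ^ ((-zc.2).val), zc.2, zc.1))
        (PMF.map e (PMF.uniformOfFintype (ZMod p × ZMod p))) := by
          rw [PMF.map_comp]
    _ = _ := by rw [uniform_map_equiv]
end

section
/- Special soundness extraction for the hidden-base well-formedness proof: let G be a group of prime order p with generator g and second generator u, and let X, Y, U_ρ, U_α, T_u, T_g : G with U_ρ = u^ρ₀ for some ρ₀ (assume U_ρ, X expressed in exponents: U_ρ = u^ρ, X arbitrary). Suppose from two accepting transcripts one extracts α, δ : ZMod p satisfying u^α = U_α, U_ρ^α = T_u, u^δ = T_u, g^δ = T_g, and X^α = Y * T_g. If U_ρ = u^ρ and α ≠ 0, then δ = ρ·α, and setting h := X * g^{-ρ} gives h^α = Y. -/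
/-- Special soundness extraction for the hidden-base well-formedness proof. -/
theorem hidden_base_extraction {G : Type*} [CommGroup G] (p : ℕ) (hp : p.Prime)
    (g u : G) (hG : ∀ x : G, x ^ p = 1) (hu : orderOf u = p)
    (X Y Uρ Uα Tu Tg : G) (ρ α δ : ZMod p)
    (h1 : u ^ (α.val) = Uα)
    (h2 : Uρ ^ (α.val) = Tu)
    (h3 : u ^ (δ.val) = Tu)
    (h4 : g ^ (δ.val) = Tg)
    (h5 : X ^ (α.val) = Y * Tg)
    (hUρ : Uρ = u ^ (ρ.val))
    (hα : α ≠ 0) :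
    δ = ρ * α ∧ (X * (g ^ (ρ.val))⁻¹) ^ (α.val) = Y := by
  haveI : Fact p.Prime := ⟨hp⟩
  have hup : u ^ (δ.val) = u ^ (ρ.val * α.val) := by
    rw [h3, ← h2, hUρ, ← pow_mul]
  have hmod : δ.val ≡ ρ.val * α.val [MOD p] := by
    have := (pow_eq_pow_iff_modEq).mp hup; rwa [hu] at this
  have hδ : δ = ρ * α := by
    have := (ZMod.natCast_eq_natCast_iff _ _ _).mpr hmod
    simpa [ZMod.natCast_val, ZMod.cast_id] using this
  refine ⟨hδ, ?_⟩
  have hgord : orderOf g ∣ p := orderOf_dvd_of_pow_eq_one (hG g)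
  have hg : g ^ (ρ.val * α.val) = g ^ (δ.val) := by
    exact (pow_eq_pow_iff_modEq).mpr ((hmod.symm).of_dvd hgord)
  rw [mul_pow, h5, inv_pow, ← pow_mul, hg, h4]
  group
end

section
/- Special soundness of the Pedersen opening proof: let G be commutative of prime exponent p with g, h : G and C : G. Given two accepting transcripts with the same R and distinct challenges: g^{z_sk}·h^{z_ω} = R·C^c, g^{z'_sk}·h^{z'_ω} = R·C^{c'}, c ≠ c'. Then with sk := (z_sk − z'_sk)/(c − c') and ω := (z_ω − z'_ω)/(c − c'), it holds that C^{c−c'} = g^{z_sk−z'_sk}·h^{z_ω−z'_ω}; if moreover the map x ↦ x^{c−c'} is injective on G (e.g., G of order p and c ≠ c'), then C = g^{sk}·h^{ω}. -/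
section Aux

variable {G : Type*} [CommGroup G] [Fintype G] {p : ℕ}

lemma pow_val_add (hcard : Fintype.card G = p) [NeZero p] (x : G) (a b : ZMod p) :
    x ^ ((a + b).val) = x ^ a.val * x ^ b.val := by
  have hx : x ^ p = 1 := by rw [← hcard]; exact pow_card_eq_one
  rw [ZMod.val_add, ← pow_eq_pow_mod _ hx, pow_add]

lemma pow_val_mul (hcard : Fintype.card G = p) [NeZero p] (x : G) (a b : ZMod p) :
    x ^ ((a * b).val) = (x ^ a.val) ^ b.val := by
  have hx : x ^ p = 1 := by rw [← hcard]; exact pow_card_eq_one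
  rw [ZMod.val_mul, ← pow_eq_pow_mod _ hx, pow_mul]

end Aux

/-- Special soundness of the Pedersen opening proof. -/
theorem pedersen_opening_special_soundness {G : Type*} [CommGroup G] [Fintype G]
    (p : ℕ) (hp : p.Prime) (hcard : Fintype.card G = p)
    (g h C R : G) (zsk zω zsk' zω' c c' : ZMod p)
    (h1 : g ^ (zsk.val) * h ^ (zω.val) = R * C ^ (c.val))
    (h2 : g ^ (zsk'.val) * h ^ (zω'.val) = R * C ^ (c'.val))
    (hc : c ≠ c') :
    C ^ ((c - c').val) = g ^ ((zsk - zsk').val) * h ^ ((zω - zω').val) ∧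
    (Function.Injective (fun x : G => x ^ ((c - c').val)) →
      C = g ^ (((zsk - zsk') * (c - c')⁻¹).val) * h ^ (((zω - zω') * (c - c')⁻¹).val)) := by
  haveI : Fact p.Prime := ⟨hp⟩
  haveI : NeZero p := ⟨hp.ne_zero⟩
  have key : ∀ (x : G) (a b : ZMod p), x ^ ((a - b).val) = x ^ a.val * (x ^ b.val)⁻¹ := by
    intro x a b
    have := pow_val_add hcard x (a - b) b
    rw [sub_add_cancel] at this
    rw [this]; group
  have main : C ^ ((c - c').val) = g ^ ((zsk - zsk').val) * h ^ ((zω - zω').val) := by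
    rw [key C c c', key g zsk zsk', key h zω zω',
      ← div_eq_mul_inv, ← div_eq_mul_inv, ← div_eq_mul_inv, ← mul_div_mul_comm,
      h1, h2, mul_div_mul_left_eq_div]
  refine ⟨main, fun hinj => ?_⟩
  apply hinj
  have hd : (c - c') ≠ 0 := sub_ne_zero.mpr hc
  have hinv : (zsk - zsk') * (c - c')⁻¹ * (c - c') = zsk - zsk' := by
    field_simp
  have hinv' : (zω - zω') * (c - c')⁻¹ * (c - c') = zω - zω' := by
    field_simp
  simp only
  rw [mul_pow, ← pow_val_mul hcard g, ← pow_val_mul hcard h, hinv, hinv', main]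
end

section
/- Special soundness of the Chaum–Pedersen equality proof: let G be a finite commutative group of prime order p with u, v, U, V, a₁, a₂ : G. If u^z = a₁·U^c, v^z = a₂·V^c, u^{z'} = a₁·U^{c'}, v^{z'} = a₂·V^{c'} with c ≠ c' in ZMod p, then setting w := (z − z')/(c − c') yields U = u^w and V = v^w. -/
section Aux

variable {G : Type*} [CommGroup G] [Fintype G] {p : ℕ}

lemma cp_key (hp : p.Prime) (hcard : Fintype.card G = p) (g : G) (n : ℕ) :
    g ^ n = g ^ ((n : ZMod p)).val := by
  haveI : NeZero p := ⟨hp.ne_zero⟩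
  have hg : g ^ p = 1 := by rw [← hcard]; exact pow_card_eq_one
  rw [ZMod.val_natCast, pow_eq_pow_mod n hg]

lemma cp_add (hp : p.Prime) (hcard : Fintype.card G = p) (g : G) (x y : ZMod p) :
    g ^ (x + y).val = g ^ x.val * g ^ y.val := by
  haveI : NeZero p := ⟨hp.ne_zero⟩
  rw [← pow_add, cp_key hp hcard g (x.val + y.val)]
  congr 1
  rw [Nat.cast_add, ZMod.natCast_val, ZMod.natCast_val, ZMod.cast_id, ZMod.cast_id]

lemma cp_mul (hp : p.Prime) (hcard : Fintype.card G = p) (g : G) (x y : ZMod p) :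
    g ^ (x * y).val = (g ^ x.val) ^ y.val := by
  haveI : NeZero p := ⟨hp.ne_zero⟩
  rw [← pow_mul, cp_key hp hcard g (x.val * y.val)]
  congr 1
  rw [Nat.cast_mul, ZMod.natCast_val, ZMod.natCast_val, ZMod.cast_id, ZMod.cast_id]

lemma cp_main (hp : p.Prime) (hcard : Fintype.card G = p)
    (u U a : G) (z z' c c' : ZMod p)
    (h1 : u ^ (z.val) = a * U ^ (c.val))
    (h1' : u ^ (z'.val) = a * U ^ (c'.val))
    (hc : c ≠ c') :
    U = u ^ (((z - z') * (c - c')⁻¹).val) := by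
  haveI : Fact p.Prime := ⟨hp⟩
  have hsub : ∀ (g : G) (x y : ZMod p), g ^ (x - y).val = g ^ x.val * (g ^ y.val)⁻¹ := by
    intro g x y
    have h := cp_add hp hcard g (x - y) y
    rw [sub_add_cancel] at h
    rw [h, mul_inv_cancel_right]
  have key : U ^ (c - c').val = u ^ (z - z').val := by
    rw [hsub, hsub, h1, h1']
    simp [mul_inv_rev, mul_comm, mul_left_comm, mul_assoc]
  have hcc : c - c' ≠ 0 := sub_ne_zero.mpr hc
  have : U ^ ((c - c') * (c - c')⁻¹).val = u ^ ((z - z') * (c - c')⁻¹).val := by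
    rw [cp_mul hp hcard, cp_mul hp hcard, key]
  rwa [mul_inv_cancel₀ hcc, ZMod.val_one_eq_one_mod, Nat.mod_eq_of_lt hp.one_lt, pow_one] at this

end Aux

/-- Special soundness of the Chaum–Pedersen equality proof. -/
theorem chaum_pedersen_special_soundness {G : Type*} [CommGroup G] [Fintype G]
    (p : ℕ) (hp : p.Prime) (hcard : Fintype.card G = p)
    (u v U V a₁ a₂ : G) (z z' c c' : ZMod p)
    (h1 : u ^ (z.val) = a₁ * U ^ (c.val))
    (h2 : v ^ (z.val) = a₂ * V ^ (c.val))
    (h1' : u ^ (z'.val) = a₁ * U ^ (c'.val))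
    (h2' : v ^ (z'.val) = a₂ * V ^ (c'.val))
    (hc : c ≠ c') :
    U = u ^ (((z - z') * (c - c')⁻¹).val) ∧
    V = v ^ (((z - z') * (c - c')⁻¹).val) := by
  exact ⟨cp_main hp hcard u U a₁ z z' c c' h1 h1' hc,
         cp_main hp hcard v V a₂ z z' c c' h2 h2' hc⟩
end
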